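/- arXiv:1301.5493 — 3 statements merged into one kernel-verified Lean document; each statement's English description precedes it below -/
import Mathlib

section
/- Let X be a topological space and let (s_n) be a sequence in a Hausdorff topological space S with no convergent subsequence. Then for any smooth (hence continuous) curve c : ℝ → ℝ × S, the preimage under c of the complement W of the set {(1/n, s_n) : n ∈ ℕ, n ≥ 1} is open in ℝ. -/
/-!
A continuous curve maps a compact piece of `ℝ` onto a compact set, and a sequence without
convergent subsequences visits a (sequentially) compact set only finitely often. Hence the closed
sets `c ⁻¹' {(1 / n, s n)}` form a locally finite family in the locally compact space `ℝ`, and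
their union, the complement of the preimage of `W`, is closed.
-/

open Filter Topology

section NoConvergentSubseq

variable {X S : Type*} [TopologicalSpace X] [TopologicalSpace S] {s : ℕ → S}

theorem finite_setOf_mem_of_isSeqCompact
    (hs : ∀ φ : ℕ → ℕ, StrictMono φ → ∀ x : S, ¬ Tendsto (s ∘ φ) atTop (𝓝 x))
    {K : Set S} (hK : IsSeqCompact K) : {n | s n ∈ K}.Finite := by
  by_contra hinf
  obtain ⟨φ, hφ, hφK⟩ :=
    extraction_of_frequently_atTop (Nat.frequently_atTop_iff_infinite.mpr hinf)
  obtain ⟨x, -, ψ, hψ, hlim⟩ := hK hφK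
  exact hs (φ ∘ ψ) (hφ.comp hψ) x hlim

theorem locallyFinite_preimage_singleton_of_forall_not_tendsto
    [FirstCountableTopology X] [WeaklyLocallyCompactSpace X]
    (hs : ∀ φ : ℕ → ℕ, StrictMono φ → ∀ x : S, ¬ Tendsto (s ∘ φ) atTop (𝓝 x))
    {g : X → S} (hg : Continuous g) : LocallyFinite fun n ↦ g ⁻¹' {s n} := by
  intro x
  obtain ⟨K, hK, hKx⟩ := exists_compact_mem_nhds x
  refine ⟨K, hKx, (finite_setOf_mem_of_isSeqCompact hs
    (hK.isSeqCompact.image hg.seqContinuous)).subset ?_⟩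
  rintro n ⟨y, hy, hyK⟩
  exact ⟨y, hyK, hy⟩

end NoConvergentSubseq

theorem preimage_of_complement_open
    {S : Type*} [TopologicalSpace S] [T2Space S] (s : ℕ → S)
    (hs : ∀ φ : ℕ → ℕ, StrictMono φ → ∀ x : S, ¬ Tendsto (s ∘ φ) atTop (𝓝 x))
    (c : ℝ → ℝ × S) (hc : Continuous c) :
    IsOpen (c ⁻¹' ({p : ℝ × S | ∃ n : ℕ, 1 ≤ n ∧ p = ((1 / (n : ℝ)), s n)}ᶜ)) := by
  set F : ℕ → Set ℝ := fun n ↦ {t | 1 ≤ n ∧ c t = ((1 / (n : ℝ)), s n)}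
  have hF : c ⁻¹' {p : ℝ × S | ∃ n : ℕ, 1 ≤ n ∧ p = ((1 / (n : ℝ)), s n)} = ⋃ n, F n := by
    ext t
    simp [F]
  have hF_closed (n : ℕ) : IsClosed (F n) :=
    isClosed_const.inter (isClosed_eq hc continuous_const)
  have hF_locallyFinite : LocallyFinite F :=
    (locallyFinite_preimage_singleton_of_forall_not_tendsto hs (continuous_snd.comp hc)).subset
      fun n t ht ↦ congrArg Prod.snd ht.2
  rw [Set.preimage_compl, isOpen_compl_iff, hF]
  exact hF_locallyFinite.isClosed_iUnion hF_closed
end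

section
/- Let S be a topological space with the property that every open neighbourhood of {0} × S in ℝ × S contains a set of the form (-ε, ε) × S for some ε > 0. If moreover every set whose preimage under all continuous curves ℝ → ℝ × S is open, is open, then S is sequentially compact. -/
open Filter Topology

/-! If a sequence `s` in `S` had no convergent subsequence, the set `A` of points
`(1 / (n + 1), y)` with `y ∈ closure {s n}` would be sequentially closed in `ℝ × S`: a sequence
in `A` either meets one closed slice frequently, or its slice indices tend to infinity and its
second coordinates force a subsequence of `s` to converge. As `ℝ` is a sequential space, every
curve then pulls `Aᶜ` back to an open set, and `Aᶜ ⊇ {0} × S`; yet no strip `(-ε, ε) × S`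
avoids `A`. -/

theorem Filter.Tendsto.of_forall_specializes {ι X : Type*} [TopologicalSpace X] {l : Filter ι}
    {f g : ι → X} {y : X} (hfg : ∀ i, f i ⤳ g i) (hg : Tendsto g l (𝓝 y)) :
    Tendsto f l (𝓝 y) :=
  tendsto_nhds.2 fun _V hV hyV =>
    (hg.eventually (hV.mem_nhds hyV)).mono fun i hi => (hfg i).mem_open hV hi

theorem Nat.exists_frequently_eq_or_tendsto_atTop (n : ℕ → ℕ) :
    (∃ N, ∃ᶠ k in atTop, n k = N) ∨ Tendsto n atTop atTop := by
  refine or_iff_not_imp_left.2 fun h => tendsto_atTop.2 fun b => ?_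
  simp only [not_exists, not_frequently] at h
  filter_upwards [(Finset.range b).eventually_all.2 fun m _ => h m] with k hk
  by_contra! hlt
  exact hk (n k) (Finset.mem_range.2 hlt) rfl

-- Closures keep each slice closed when `S` is not T₁.
def stripSeqSet {S : Type*} [TopologicalSpace S] (s : ℕ → S) : Set (ℝ × S) :=
  ⋃ n : ℕ, {((n : ℝ) + 1)⁻¹} ×ˢ closure {s n}

section
variable {S : Type*} [TopologicalSpace S] {s : ℕ → S}

theorem mem_stripSeqSet {p : ℝ × S} :
    p ∈ stripSeqSet s ↔ ∃ n : ℕ, p.1 = ((n : ℝ) + 1)⁻¹ ∧ s n ⤳ p.2 := by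
  simp only [stripSeqSet, Set.mem_iUnion, Set.mem_prod, Set.mem_singleton_iff,
    specializes_iff_mem_closure]

theorem isSeqClosed_stripSeqSet
    (hs : ∀ y, ∀ n : ℕ → ℕ, Tendsto n atTop atTop → ¬ Tendsto (s ∘ n) atTop (𝓝 y)) :
    IsSeqClosed (stripSeqSet s) := by
  intro p q hp hpq
  choose n hn₁ hn₂ using fun k => mem_stripSeqSet.1 (hp k)
  rcases Nat.exists_frequently_eq_or_tendsto_atTop n with ⟨N, hN⟩ | htop
  · obtain ⟨ψ, hψ, hψN⟩ := extraction_of_frequently_atTop hN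
    have hpψ (j : ℕ) : p (ψ j) ∈ {((N : ℝ) + 1)⁻¹} ×ˢ closure {s N} :=
      ⟨by simp [hn₁, hψN], specializes_iff_mem_closure.1 (hψN j ▸ hn₂ (ψ j))⟩
    exact Set.mem_iUnion.2 ⟨N, (isClosed_singleton.prod isClosed_closure).mem_of_tendsto
      (hpq.comp hψ.tendsto_atTop) (Eventually.of_forall hpψ)⟩
  · exact absurd (Tendsto.of_forall_specializes hn₂ ((continuous_snd.tendsto _).comp hpq))
      (hs q.2 n htop)

theorem zero_prod_univ_subset_compl_stripSeqSet :
    {0} ×ˢ (Set.univ : Set S) ⊆ (stripSeqSet s)ᶜ := by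
  rintro p ⟨hp, -⟩ hpA
  obtain ⟨n, hn, -⟩ := mem_stripSeqSet.1 hpA
  rw [Set.mem_singleton_iff.1 hp] at hn
  exact (inv_pos.2 n.cast_add_one_pos).ne hn

theorem exists_mem_Ioo_prod_univ_stripSeqSet {ε : ℝ} (hε : 0 < ε) :
    ∃ p ∈ Set.Ioo (-ε) ε ×ˢ (Set.univ : Set S), p ∈ stripSeqSet s := by
  obtain ⟨N, hN⟩ := exists_nat_one_div_lt hε
  refine ⟨(((N : ℝ) + 1)⁻¹, s N), ⟨⟨?_, by simpa using hN⟩, trivial⟩,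
    mem_stripSeqSet.2 ⟨N, rfl, specializes_rfl⟩⟩
  linarith [inv_pos.2 (N.cast_add_one_pos (α := ℝ))]

end

theorem seq_compact_of_strip_property {S : Type*} [TopologicalSpace S]
    (hstrip : ∀ W : Set (ℝ × S),
      (∀ c : ℝ → ℝ × S, Continuous c → IsOpen (c ⁻¹' W)) →
      ({0} ×ˢ (Set.univ : Set S)) ⊆ W →
      ∃ ε > (0:ℝ), (Set.Ioo (-ε) ε ×ˢ (Set.univ : Set S)) ⊆ W) :
    IsSeqCompact (Set.univ : Set S) := by
  intro s _
  by_contra! hs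
  have hnoconv : ∀ y, ∀ n : ℕ → ℕ, Tendsto n atTop atTop → ¬ Tendsto (s ∘ n) atTop (𝓝 y) := by
    intro y n hn hsn
    obtain ⟨ψ, hψ, hnψ⟩ := strictMono_subseq_of_tendsto_atTop hn
    exact hs y trivial (n ∘ ψ) hnψ (hsn.comp hψ.tendsto_atTop)
  have hcurve (c : ℝ → ℝ × S) (hc : Continuous c) : IsOpen (c ⁻¹' (stripSeqSet s)ᶜ) :=
    ((isSeqClosed_stripSeqSet hnoconv).preimage hc.seqContinuous).isClosed.isOpen_compl
  obtain ⟨ε, hε, hsub⟩ := hstrip _ hcurve zero_prod_univ_subset_compl_stripSeqSet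
  obtain ⟨p, hpε, hpA⟩ := exists_mem_Ioo_prod_univ_stripSeqSet (s := s) hε
  exact hsub hpε hpA
end

section
/- Suppose g : C → [0,1] is a function on the space C = C^∞(S, ℝ) of bounded-generating smooth functions on a space S, with g(0) = 1, g continuous along smooth paths, and g(β) ≠ 0 implying β has image in (-1,1). Then every f ∈ C has bounded image: there exists t ≠ 0 with t·f ∈ C^∞(S, (-1,1)), hence |f(s)| < 1/|t| for all s. -/
open Filter Topology

theorem ContinuousAt.exists_ne_of_apply_ne {X Y : Type*} [TopologicalSpace X]
    [TopologicalSpace Y] [T1Space Y] {φ : X → Y} {x : X} [(𝓝[≠] x).NeBot] {y : Y}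
    (hφ : ContinuousAt φ x) (hy : φ x ≠ y) : ∃ x', x' ≠ x ∧ φ x' ≠ y :=
  ((hφ.eventually_ne hy).filter_mono nhdsWithin_le_nhds |>.and
    (self_mem_nhdsWithin (s := {x}ᶜ))).exists.imp fun _ h => ⟨h.2, h.1⟩

theorem bounded_of_weakly_smoothly_compact_general {S : Type*}
    (g : (S → ℝ) → ℝ)
    (hg0 : g (fun _ => 0) = 1)
    (hsupp : ∀ β : S → ℝ, g β ≠ 0 → ∀ s : S, β s ∈ Set.Ioo (-1:ℝ) 1)
    (f : S → ℝ)
    (hcont : ContinuousAt (fun t : ℝ => g (fun s => t * f s)) 0) :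
    ∃ t : ℝ, t ≠ 0 ∧ (∀ s : S, t * f s ∈ Set.Ioo (-1:ℝ) 1) ∧
      ∀ s : S, |f s| < 1 / |t| := by
  obtain ⟨t, ht, hgt⟩ := hcont.exists_ne_of_apply_ne (y := 0) (by simp [hg0])
  have htf := hsupp _ hgt
  refine ⟨t, ht, htf, fun s => ?_⟩
  have h : |t| * |f s| < 1 := by simpa only [abs_mul] using abs_lt.mpr (htf s)
  rwa [lt_div_iff₀' (abs_pos.mpr ht)]

theorem bounded_of_weakly_smoothly_compact {S : Type*}
    (g : (S → ℝ) → ℝ)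
    (hg01 : ∀ β : S → ℝ, g β ∈ Set.Icc (0:ℝ) 1)
    (hg0 : g (fun _ => 0) = 1)
    (hsupp : ∀ β : S → ℝ, g β ≠ 0 → ∀ s : S, β s ∈ Set.Ioo (-1:ℝ) 1)
    (f : S → ℝ)
    (hcont : ContinuousAt (fun t : ℝ => g (fun s => t * f s)) 0) :
    ∃ t : ℝ, t ≠ 0 ∧ (∀ s : S, t * f s ∈ Set.Ioo (-1:ℝ) 1) ∧
      ∀ s : S, |f s| < 1 / |t| :=
  bounded_of_weakly_smoothly_compact_general g hg0 hsupp f hcont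
end
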